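/- arXiv:2310.19396 — 2 statements merged into one kernel-verified Lean document; each statement's English description precedes it below -/
import Mathlib

section
/- Let n ≥ 1 and p ≥ 1 be integers, let N = n + p + 1, and let h : [0,∞) → (0,∞) be a continuous increasing function with lim_{t→∞} h(t)/t = 0. Consider the Hartogs domain Ω = {(z,w) ∈ ℂ^{n+1} × ℂ^p : ‖w‖ < h(‖z‖)} ⊆ ℂ^N. Then the closure of Ω in ℙ^N meets the hyperplane at infinity H = ℙ^N \ ℂ^N exactly in the projectivization L ≅ ℙ^n of the linear subspace ℂ^{n+1} × {0} ⊆ ℂ^N; that is, Ω_∞ = L. -/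
open scoped Manifold
open Topology Set Filter Function

noncomputable section

instance {K V : Type*} [DivisionRing K] [AddCommGroup V] [Module K V] [TopologicalSpace V] :
    TopologicalSpace (Projectivization K V) :=
  instTopologicalSpaceQuotient

/-- The standard affine chart `ℂᴺ → ℙᴺ`, sending `x` to `[1 : x]`.  Here `ℙᴺ` is realized
as the projectivization of `ℂ × ℂᴺ`. -/
def affineToProj {E : Type*} [AddCommGroup E] [Module ℂ E] (x : E) :
    Projectivization ℂ (ℂ × E) :=
  Projectivization.mk ℂ ((1 : ℂ), x) (fun h => one_ne_zero (congrArg Prod.fst h))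

/-- The hyperplane at infinity `H = ℙᴺ \ ℂᴺ`: the points of `ℙᴺ` whose first homogeneous
coordinate vanishes. -/
def hyperplaneAtInfinity (E : Type*) [AddCommGroup E] [Module ℂ E] :
    Set (Projectivization ℂ (ℂ × E)) :=
  {P | P.rep.1 = 0}

/-- The limit set at infinity of a subset `A ⊆ ℂᴺ`: the intersection of the closure
of `A` in `ℙᴺ` with the hyperplane at infinity. -/
def limitSet {E : Type*} [AddCommGroup E] [Module ℂ E] [TopologicalSpace E] (A : Set E) :
    Set (Projectivization ℂ (ℂ × E)) :=
  closure (affineToProj '' A) ∩ hyperplaneAtInfinity E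

/-- The projectivization of a linear subspace `W ⊆ ℂ × ℂᴺ`, as a subset of `ℙᴺ`. -/
def projSubspace {E : Type*} [AddCommGroup E] [Module ℂ E] (W : Submodule ℂ (ℂ × E)) :
    Set (Projectivization ℂ (ℂ × E)) :=
  {P | P.rep ∈ W}

/-!
Since the quotient map `ℂ × ℂᴺ ∖ {0} → ℙᴺ` is open, a point `[0 : z : w]` lies in the closure
of `Ω` iff `(0, z, w)` lies in the closure of the cone `{(c, c • v) | c ≠ 0, v ∈ Ω}`.
Monotonicity and `h(t)/t → 0` give `h(t) ≤ εt + C_ε`, so the cone lies in the closed set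
`‖w‖ ≤ ε‖z‖ + C_ε |c|`; at `c = 0` this forces `w = 0`. Conversely `(t, z, 0) = t • (1, z/t, 0)`
lies in the cone because `h > 0`, and tends to `(0, z, 0)` as `t → 0`.
-/

namespace Projectivization

open scoped LinearAlgebra.Projectivization

variable {K V : Type*} [DivisionRing K] [AddCommGroup V] [Module K V]
  [TopologicalSpace V] [ContinuousConstSMul K V]

theorem isOpenMap_mk' : IsOpenMap (mk' K : {v : V // v ≠ 0} → ℙ K V) := by
  intro U hU
  let scale (a : Kˣ) : {v : V // v ≠ 0} → {v : V // v ≠ 0} :=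
    fun v => ⟨a • (v : V), (smul_ne_zero_iff_ne a).2 v.2⟩
  have hsat : mk' K ⁻¹' (mk' K '' U) = ⋃ a : Kˣ, scale a ⁻¹' U := by
    ext v
    simp only [mem_preimage, mem_image, mem_iUnion, mk'_eq_mk, mk_eq_mk_iff]
    constructor
    · rintro ⟨u, hu, a, hau⟩
      exact ⟨a, by simpa [scale, hau] using hu⟩
    · rintro ⟨a, ha⟩
      exact ⟨_, ha, a, rfl⟩
  show IsOpen (mk' K ⁻¹' (mk' K '' U))
  rw [hsat]
  exact isOpen_iUnion fun a =>
    hU.preimage (((continuous_const_smul (a : K)).comp continuous_subtype_val).subtype_mk _)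

theorem mem_closure_iff_rep_mem_closure {S : Set (ℙ K V)} {P : ℙ K V} :
    P ∈ closure S ↔ P.rep ∈ closure {v | ∃ hv : v ≠ 0, mk K v hv ∈ S} := by
  have hval : Subtype.val '' (mk' K ⁻¹' S) = {v | ∃ hv : v ≠ 0, mk K v hv ∈ S} := by
    ext v
    simp
  have hlift : P ∈ closure S ↔ (⟨P.rep, P.rep_nonzero⟩ : {v : V // v ≠ 0}) ∈
      closure (mk' K ⁻¹' S) := by
    rw [← isOpenMap_mk'.preimage_closure_eq_closure_preimage continuous_quotient_mk',
      mem_preimage, mk'_eq_mk, mk_rep]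
  rw [hlift, closure_subtype, hval]

end Projectivization

section AffineCone

variable {E : Type*} [AddCommGroup E] [Module ℂ E]

/-- The vectors `c • (1, v)` with `c ≠ 0` and `v ∈ A`: the homogeneous coordinates of the points
of `affineToProj '' A`. -/
def affineCone (A : Set E) : Set (ℂ × E) :=
  {x | x.1 ≠ 0 ∧ x.1⁻¹ • x.2 ∈ A}

theorem mk_mem_image_affineToProj_iff {A : Set E} {x : ℂ × E} (hx : x ≠ 0) :
    Projectivization.mk ℂ x hx ∈ affineToProj '' A ↔ x ∈ affineCone A := by
  simp only [affineToProj, mem_image, Projectivization.mk_eq_mk_iff', affineCone, mem_ofPred_eq]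
  constructor
  · rintro ⟨v, hv, a, hax⟩
    obtain ⟨ha1, rfl⟩ := Prod.ext_iff.1 hax
    have hx1 : x.1 = a⁻¹ := eq_inv_of_mul_eq_one_right ha1
    have ha : a ≠ 0 := left_ne_zero_of_mul_eq_one ha1
    exact ⟨by simpa [hx1], by simpa [hx1] using hv⟩
  · rintro ⟨h1, hA⟩
    refine ⟨_, hA, x.1⁻¹, ?_⟩
    ext <;> simp [h1]

theorem mem_closure_image_affineToProj_iff [TopologicalSpace E] [ContinuousConstSMul ℂ E]
    {A : Set E} {P : Projectivization ℂ (ℂ × E)} :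
    P ∈ closure (affineToProj '' A) ↔ P.rep ∈ closure (affineCone A) := by
  rw [Projectivization.mem_closure_iff_rep_mem_closure]
  congr! 2
  ext x
  refine ⟨fun ⟨hx, hA⟩ => (mk_mem_image_affineToProj_iff hx).1 hA, fun hx => ?_⟩
  have hx0 : x ≠ 0 := fun h => hx.1 (by simp [h])
  exact ⟨hx0, (mk_mem_image_affineToProj_iff hx0).2 hx⟩

theorem zero_prod_mem_closure_affineCone [TopologicalSpace E] [ContinuousConstSMul ℂ E]
    {A : Set E} {v : E} (hv : ∀ t : ℂ, t ≠ 0 → t • v ∈ A) :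
    ((0 : ℂ), v) ∈ closure (affineCone A) := by
  refine mem_closure_of_tendsto (f := fun t : ℂ => (t, v)) (b := 𝓝[≠] 0) ?_ ?_
  · exact ((continuous_id.prodMk continuous_const).tendsto 0).mono_left nhdsWithin_le_nhds
  · filter_upwards [self_mem_nhdsWithin] with t ht using ⟨ht, hv _ (inv_ne_zero ht)⟩

end AffineCone

theorem MonotoneOn.exists_le_mul_add_of_tendsto_div {h : ℝ → ℝ} (hmono : MonotoneOn h (Ici 0))
    (hlim : Tendsto (fun t => h t / t) atTop (𝓝 0)) {ε : ℝ} (hε : 0 < ε) :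
    ∃ C, ∀ t, 0 ≤ t → h t ≤ ε * t + C := by
  obtain ⟨T, hT⟩ := eventually_atTop.1 (hlim.eventually (gt_mem_nhds hε))
  set T' := max T 1
  refine ⟨|h T'|, fun t ht => ?_⟩
  rcases le_total t T' with htT | hTt
  · calc h t ≤ h T' := hmono ht (zero_le_one.trans (le_max_right T 1)) htT
      _ ≤ ε * t + |h T'| := by nlinarith [le_abs_self (h T')]
  · have htpos : 0 < t := (zero_lt_one.trans_le (le_max_right T 1)).trans_le hTt
    have hdiv : h t / t < ε := hT t ((le_max_left T 1).trans hTt)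
    rw [div_lt_iff₀ htpos] at hdiv
    nlinarith [abs_nonneg (h T')]

section HartogsCone

variable {E₁ E₂ : Type*} [SeminormedAddCommGroup E₁] [NormedSpace ℂ E₁]

theorem norm_le_of_mem_closure_affineCone [SeminormedAddCommGroup E₂] [NormedSpace ℂ E₂]
    {A : Set (E₁ × E₂)} {ε C : ℝ} (hA : ∀ v ∈ A, ‖v.2‖ ≤ ε * ‖v.1‖ + C) {x : ℂ × E₁ × E₂}
    (hx : x ∈ closure (affineCone A)) :
    ‖x.2.2‖ ≤ ε * ‖x.2.1‖ + C * ‖x.1‖ := by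
  have hclosed : IsClosed {y : ℂ × E₁ × E₂ | ‖y.2.2‖ ≤ ε * ‖y.2.1‖ + C * ‖y.1‖} :=
    isClosed_le (by fun_prop) (by fun_prop)
  refine closure_minimal (fun y hy => ?_) hclosed hx
  obtain ⟨hy1, hyA⟩ := hy
  have hbound := hA _ hyA
  simp only [Prod.smul_fst, Prod.smul_snd, norm_smul, norm_inv] at hbound
  have hy1' : ‖y.1‖ ≠ 0 := norm_ne_zero_iff.2 hy1
  calc ‖y.2.2‖ = ‖y.1‖ * (‖y.1‖⁻¹ * ‖y.2.2‖) := by field_simp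
    _ ≤ ‖y.1‖ * (ε * (‖y.1‖⁻¹ * ‖y.2.1‖) + C) := by gcongr
    _ = ε * ‖y.2.1‖ + C * ‖y.1‖ := by field_simp

theorem snd_snd_eq_zero_of_mem_closure_affineCone [NormedAddCommGroup E₂] [NormedSpace ℂ E₂]
    {A : Set (E₁ × E₂)} (hA : ∀ ε > 0, ∃ C, ∀ v ∈ A, ‖v.2‖ ≤ ε * ‖v.1‖ + C) {x : ℂ × E₁ × E₂}
    (hx : x ∈ closure (affineCone A)) (hx1 : x.1 = 0) :
    x.2.2 = 0 := by
  have hle : ∀ ε > 0, ‖x.2.2‖ ≤ ε * ‖x.2.1‖ := fun ε hε => by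
    obtain ⟨C, hC⟩ := hA ε hε
    simpa [hx1] using norm_le_of_mem_closure_affineCone hC hx
  have hlim : Tendsto (fun ε : ℝ => ε * ‖x.2.1‖) (𝓝[>] 0) (𝓝 0) := by
    simpa using (tendsto_nhdsWithin_of_tendsto_nhds (tendsto_id (x := 𝓝 (0 : ℝ)))).mul_const
      ‖x.2.1‖
  exact norm_le_zero_iff.1 <| le_of_tendsto_of_tendsto tendsto_const_nhds hlim
    (eventually_nhdsWithin_of_forall hle)

end HartogsCone

theorem limit_set_of_hartogs_domain_general
    (n p : ℕ)
    (h : ℝ → ℝ) (hmono : MonotoneOn h (Ici 0))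
    (hpos : ∀ t ∈ Ici (0 : ℝ), 0 < h t)
    (hlim : Tendsto (fun t => h t / t) atTop (nhds 0)) :
    limitSet {v : EuclideanSpace ℂ (Fin (n + 1)) × EuclideanSpace ℂ (Fin p) |
        ‖v.2‖ < h ‖v.1‖} =
      projSubspace ((⊥ : Submodule ℂ ℂ).prod
        (((⊤ : Submodule ℂ (EuclideanSpace ℂ (Fin (n + 1))))).prod
          (⊥ : Submodule ℂ (EuclideanSpace ℂ (Fin p))))) := by
  have hgrowth : ∀ ε > 0, ∃ C, ∀ v : EuclideanSpace ℂ (Fin (n + 1)) × EuclideanSpace ℂ (Fin p),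
      ‖v.2‖ < h ‖v.1‖ → ‖v.2‖ ≤ ε * ‖v.1‖ + C := fun ε hε => by
    obtain ⟨C, hC⟩ := hmono.exists_le_mul_add_of_tendsto_div hlim hε
    exact ⟨C, fun v hv => hv.le.trans (hC _ (norm_nonneg _))⟩
  ext P
  simp only [limitSet, hyperplaneAtInfinity, projSubspace, mem_inter_iff, mem_ofPred_eq,
    mem_closure_image_affineToProj_iff, Submodule.mem_prod, Submodule.mem_bot, Submodule.mem_top,
    true_and]
  constructor
  · rintro ⟨hcl, h0⟩
    exact ⟨h0, snd_snd_eq_zero_of_mem_closure_affineCone hgrowth hcl h0⟩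
  · rintro ⟨h0, hw⟩
    refine ⟨?_, h0⟩
    rw [show P.rep = ((0 : ℂ), P.rep.2.1, 0) from Prod.ext h0 (Prod.ext rfl hw)]
    exact zero_prod_mem_closure_affineCone fun t _ => by
      simpa using hpos _ (norm_nonneg (t • P.rep.2.1))

/-- Let `h : [0,∞) → (0,∞)` be continuous and increasing with
`h(t)/t → 0` as `t → ∞`, and let `Ω = {(z,w) ∈ ℂ^{n+1} × ℂᵖ : ‖w‖ < h ‖z‖}` be the
corresponding Hartogs domain in `ℂᴺ`, `N = n + p + 1`. Then the limit set of `Ω` at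
infinity is exactly the projectivization `L ≅ ℙⁿ` of the linear subspace
`ℂ^{n+1} × {0} ⊆ ℂᴺ`. -/
theorem limit_set_of_hartogs_domain
    (n p : ℕ) (hn : 1 ≤ n) (hp : 1 ≤ p)
    (h : ℝ → ℝ) (hcont : ContinuousOn h (Ici 0)) (hmono : MonotoneOn h (Ici 0))
    (hpos : ∀ t ∈ Ici (0 : ℝ), 0 < h t)
    (hlim : Tendsto (fun t => h t / t) atTop (nhds 0)) :
    limitSet {v : EuclideanSpace ℂ (Fin (n + 1)) × EuclideanSpace ℂ (Fin p) |
        ‖v.2‖ < h ‖v.1‖} =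
      projSubspace ((⊥ : Submodule ℂ ℂ).prod
        (((⊤ : Submodule ℂ (EuclideanSpace ℂ (Fin (n + 1))))).prod
          (⊥ : Submodule ℂ (EuclideanSpace ℂ (Fin p))))) :=
  limit_set_of_hartogs_domain_general n p h hmono hpos hlim
end
end

section
/- Let n ≥ 1 and p ≥ 1 be integers, N = n + p + 1, and let h : [0,∞) → (0,∞) be a continuous increasing function with lim_{t→∞} h(t)/t = 0. Let X be a noncompact topological space and f = (z,w) : X → ℂ^{n+1} × ℂ^p a proper continuous map satisfying ‖w(x)‖ < h(‖z(x)‖) for all x ∈ X. Then the limit set f(X)_∞ = closure(f(X) in ℙ^N) ∩ H is nonempty and contained in the projectivization L ≅ ℙ^n of the linear subspace ℂ^{n+1} × {0} ⊆ ℂ^N. -/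
open scoped Manifold
open Topology Set Filter Function

noncomputable section

/-- A representative of `mk' v` is a nonzero scalar multiple of `v`. -/
lemma rep_mk'_smul {V : Type*} [AddCommGroup V] [Module ℂ V] [TopologicalSpace V]
    (v : { v : V // v ≠ 0 }) :
    ∃ c : ℂ, c ≠ 0 ∧ (Projectivization.mk' ℂ v).rep = c • (v : V) := by
  obtain ⟨c, hc⟩ := Projectivization.exists_smul_eq_mk_rep ℂ (v : V) v.2
  exact ⟨(c : ℂ), c.ne_zero, by rw [Projectivization.mk'_eq_mk]; exact hc.symm⟩

/-- If `O` is an open cone (invariant under nonzero scaling) containing a representative of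
`P`, and `P` is in the closure of the image of `B` under `mk'`, then some element of `B`
lies in `O`. -/
lemma exists_mem_cone_of_mem_closure {V : Type*} [AddCommGroup V] [Module ℂ V]
    [TopologicalSpace V] {O : Set V} (hO : IsOpen O)
    (hinv : ∀ (c : ℂ), c ≠ 0 → ∀ v ∈ O, c • v ∈ O)
    {P : Projectivization ℂ V} (hP : P.rep ∈ O)
    {B : Set { v : V // v ≠ 0 }}
    (hcl : P ∈ closure (Projectivization.mk' ℂ '' B)) :
    ∃ b ∈ B, (b : V) ∈ O := by
  have key : ∀ v : { v : V // v ≠ 0 }, (Projectivization.mk' ℂ v).rep ∈ O ↔ (v : V) ∈ O := by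
    intro v
    obtain ⟨c, hc0, hc⟩ := rep_mk'_smul v
    constructor
    · intro hrep
      have hv : (v : V) = c⁻¹ • (Projectivization.mk' ℂ v).rep := by
        rw [hc, smul_smul, inv_mul_cancel₀ hc0, one_smul]
      rw [hv]
      exact hinv _ (inv_ne_zero hc0) _ hrep
    · intro hv
      rw [hc]
      exact hinv _ hc0 _ hv
  have hUopen : IsOpen {Q : Projectivization ℂ V | Q.rep ∈ O} := by
    refine isOpen_coinduced.mpr ?_
    have hpre : (Projectivization.mk' ℂ) ⁻¹' {Q : Projectivization ℂ V | Q.rep ∈ O}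
        = Subtype.val ⁻¹' O := by
      ext v
      exact key v
    exact hpre ▸ hO.preimage continuous_subtype_val
  have hmem : P ∈ {Q : Projectivization ℂ V | Q.rep ∈ O} := hP
  rcases (_root_.mem_closure_iff.mp hcl) _ hUopen hmem with ⟨Q, hQU, hQB⟩
  rcases hQB with ⟨b, hbB, rfl⟩
  exact ⟨b, hbB, (key b).mp hQU⟩

/-- Projectivizations of proper normed spaces are compact. -/
lemma compactSpace_projectivization {V : Type*} [NormedAddCommGroup V]
    [NormedSpace ℂ V] [ProperSpace V] : CompactSpace (Projectivization ℂ V) := by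
  have hne : ∀ v : Metric.sphere (0 : V) 1, (v : V) ≠ 0 := by
    intro v hv0
    have := v.2
    rw [mem_sphere_zero_iff_norm, hv0, norm_zero] at this
    exact one_ne_zero this.symm
  set φ : Metric.sphere (0 : V) 1 → Projectivization ℂ V :=
    fun v => Projectivization.mk' ℂ ⟨(v : V), hne v⟩ with hφdef
  have hφc : Continuous φ :=
    continuous_quot_mk.comp (Continuous.subtype_mk continuous_subtype_val _)
  have hφs : Surjective φ := by
    intro P
    have hr := P.rep_nonzero
    have hnorm : ‖P.rep‖ ≠ 0 := norm_ne_zero_iff.mpr hr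
    set c : ℂ := ((‖P.rep‖⁻¹ : ℝ) : ℂ) with hcdef
    have hc0 : c ≠ 0 := by
      simp [hcdef, hnorm]
    have hmemsph : c • P.rep ∈ Metric.sphere (0 : V) 1 := by
      rw [mem_sphere_zero_iff_norm, norm_smul, hcdef, Complex.norm_real,
        Real.norm_eq_abs, abs_of_nonneg (inv_nonneg.mpr (norm_nonneg _)),
        inv_mul_cancel₀ hnorm]
    refine ⟨⟨c • P.rep, hmemsph⟩, ?_⟩
    show Projectivization.mk' ℂ ⟨c • P.rep, _⟩ = P
    rw [Projectivization.mk'_eq_mk]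
    conv_rhs => rw [← Projectivization.mk_rep P]
    exact (Projectivization.mk_eq_mk_iff' ℂ _ _ _ P.rep_nonzero).mpr ⟨c, rfl⟩
  constructor
  have : IsCompact (range φ) := isCompact_range hφc
  rwa [Set.range_eq_univ.mpr hφs] at this

/-- Let `h : [0,∞) → (0,∞)` be continuous and increasing with
`h(t)/t → 0` as `t → ∞`, let `X` be a noncompact topological space and
`f = (z,w) : X → ℂ^{n+1} × ℂᵖ` a proper continuous map with `‖w x‖ < h ‖z x‖` for all
`x`. Then the limit set of `f(X)` at infinity is nonempty and contained in the
projectivization `L ≅ ℙⁿ` of the linear subspace `ℂ^{n+1} × {0} ⊆ ℂᴺ`, `N = n + p + 1`. -/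
theorem limit_set_of_proper_map_into_hartogs_domain
    (n p : ℕ) (hn : 1 ≤ n) (hp : 1 ≤ p)
    (h : ℝ → ℝ) (hcont : ContinuousOn h (Ici 0)) (hmono : MonotoneOn h (Ici 0))
    (hpos : ∀ t ∈ Ici (0 : ℝ), 0 < h t)
    (hlim : Tendsto (fun t => h t / t) atTop (nhds 0))
    (X : Type*) [TopologicalSpace X] [NoncompactSpace X]
    (f : X → EuclideanSpace ℂ (Fin (n + 1)) × EuclideanSpace ℂ (Fin p))
    (hproper : IsProperMap f)
    (hf : ∀ x : X, ‖(f x).2‖ < h ‖(f x).1‖) :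
    (limitSet (range f)).Nonempty ∧
    limitSet (range f) ⊆
      projSubspace ((⊥ : Submodule ℂ ℂ).prod
        (((⊤ : Submodule ℂ (EuclideanSpace ℂ (Fin (n + 1))))).prod
          (⊥ : Submodule ℂ (EuclideanSpace ℂ (Fin p))))) := by
  have hne1 : ∀ a : EuclideanSpace ℂ (Fin (n + 1)) × EuclideanSpace ℂ (Fin p),
      ((1 : ℂ), a) ≠ 0 := fun a h => one_ne_zero (congrArg Prod.fst h)
  set F : X → { v : ℂ × (EuclideanSpace ℂ (Fin (n + 1)) × EuclideanSpace ℂ (Fin p)) // v ≠ 0 } :=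
    fun x => ⟨((1 : ℂ), f x), hne1 (f x)⟩ with hFdef
  have hcomp : (fun x => affineToProj (f x)) = fun x => Projectivization.mk' ℂ (F x) := rfl
  have himg : affineToProj '' range f = Projectivization.mk' ℂ '' range F := by
    rw [← Set.range_comp, ← Set.range_comp]
    rfl
  constructor
  · -- nonemptiness
    have hcs : CompactSpace (Projectivization ℂ
        (ℂ × (EuclideanSpace ℂ (Fin (n + 1)) × EuclideanSpace ℂ (Fin p)))) :=
      compactSpace_projectivization
    set Fl := Filter.map (fun x => affineToProj (f x)) (Filter.cocompact X) with hFldef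
    have hFlne : Fl.NeBot := Filter.map_neBot
    obtain ⟨P, hPcl⟩ := exists_clusterPt_of_compactSpace Fl
    have hmemcl : ∀ s ∈ Fl, P ∈ closure s := by
      intro s hs
      exact mem_closure_iff_clusterPt.mpr (hPcl.mono (Filter.le_principal_iff.mpr hs))
    have hPclosure : P ∈ closure (affineToProj '' range f) := by
      apply hmemcl
      rw [hFldef, Filter.mem_map]
      exact Filter.univ_mem' fun x => ⟨f x, ⟨x, rfl⟩, rfl⟩
    have hPH : P ∈ hyperplaneAtInfinity _ := by
      by_contra h0
      have h0' : P.rep.1 ≠ 0 := h0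
      have h1pos : (0 : ℝ) < ‖P.rep.1‖ := norm_pos_iff.mpr h0'
      set δ : ℝ := ‖P.rep.1‖ / (‖P.rep.2‖ + 1) with hδdef
      have hδpos : 0 < δ := div_pos h1pos (by positivity)
      set O : Set (ℂ × (EuclideanSpace ℂ (Fin (n + 1)) × EuclideanSpace ℂ (Fin p))) :=
        {v | δ * ‖v.2‖ < ‖v.1‖} with hOdef
      have hOopen : IsOpen O := by
        apply isOpen_lt
        · exact (continuous_const.mul (continuous_norm.comp continuous_snd))
        · exact continuous_norm.comp continuous_fst
      have hinv : ∀ (c : ℂ), c ≠ 0 → ∀ v ∈ O, c • v ∈ O := by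
        intro c hc v hv
        have hcpos : (0 : ℝ) < ‖c‖ := norm_pos_iff.mpr hc
        show δ * ‖c • v.2‖ < ‖c • v.1‖
        rw [norm_smul, norm_smul]
        calc δ * (‖c‖ * ‖v.2‖) = ‖c‖ * (δ * ‖v.2‖) := by ring
        _ < ‖c‖ * ‖v.1‖ := by exact (mul_lt_mul_iff_right₀ hcpos).mpr hv
      have hPO : P.rep ∈ O := by
        show δ * ‖P.rep.2‖ < ‖P.rep.1‖
        rw [hδdef, div_mul_eq_mul_div, mul_comm]
        rw [div_lt_iff₀ (by positivity)]
        nlinarith [norm_nonneg P.rep.2, h1pos]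
      set K : Set X := f ⁻¹' Metric.closedBall 0 (1 / δ) with hKdef
      have hKc : IsCompact K := hproper.isCompact_preimage (isCompact_closedBall _ _)
      have hsFl : (fun x => affineToProj (f x)) '' Kᶜ ∈ Fl := by
        rw [hFldef, Filter.mem_map]
        filter_upwards [Filter.mem_cocompact.mpr ⟨K, hKc, le_refl Kᶜ⟩] with x hx
        exact ⟨x, hx, rfl⟩
      have hcl2 : P ∈ closure (Projectivization.mk' ℂ '' (F '' Kᶜ)) := by
        have : (fun x => affineToProj (f x)) '' Kᶜ = Projectivization.mk' ℂ '' (F '' Kᶜ) := by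
          rw [← Set.image_comp]
          rfl
        exact this ▸ hmemcl _ hsFl
      obtain ⟨b, hbB, hbO⟩ := exists_mem_cone_of_mem_closure hOopen hinv hPO hcl2
      rcases hbB with ⟨x, hxK, rfl⟩
      have hbO' : δ * ‖f x‖ < ‖(1 : ℂ)‖ := hbO
      rw [norm_one] at hbO'
      apply hxK
      rw [hKdef, Set.mem_preimage, mem_closedBall_zero_iff]
      rw [mul_comm] at hbO'
      exact le_of_lt ((lt_div_iff₀ hδpos).mpr hbO')
    exact ⟨P, hPclosure, hPH⟩
  · -- containment
    rintro P ⟨hPclosure, hPH⟩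
    have hP1 : P.rep.1 = 0 := hPH
    rw [projSubspace, Set.mem_setOf_eq, Submodule.mem_prod, Submodule.mem_prod]
    refine ⟨hP1, trivial, ?_⟩
    show P.rep.2.2 = 0
    by_contra hw
    have hcpos : (0 : ℝ) < ‖P.rep.2.2‖ := norm_pos_iff.mpr hw
    set ε : ℝ := ‖P.rep.2.2‖ / (‖P.rep.2.1‖ + 1) with hεdef
    have hεpos : 0 < ε := div_pos hcpos (by positivity)
    obtain ⟨T₀, hT₀⟩ := Filter.eventually_atTop.mp (hlim.eventually_lt_const hεpos)
    set T : ℝ := max T₀ 1 with hTdef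
    have hT1 : (1 : ℝ) ≤ T := le_max_right _ _
    have hT0 : (0 : ℝ) ≤ T := le_trans zero_le_one hT1
    set M : ℝ := h T with hMdef
    set O : Set (ℂ × (EuclideanSpace ℂ (Fin (n + 1)) × EuclideanSpace ℂ (Fin p))) :=
      {v | M * ‖v.1‖ < ‖v.2.2‖ ∧ ε * ‖v.2.1‖ < ‖v.2.2‖} with hOdef
    have hOopen : IsOpen O := by
      rw [hOdef, Set.setOf_and]
      exact IsOpen.inter
        (isOpen_lt (continuous_const.mul (continuous_norm.comp continuous_fst))
          (continuous_norm.comp (continuous_snd.comp continuous_snd)))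
        (isOpen_lt (continuous_const.mul (continuous_norm.comp
            (continuous_fst.comp continuous_snd)))
          (continuous_norm.comp (continuous_snd.comp continuous_snd)))
    have hinv : ∀ (c : ℂ), c ≠ 0 → ∀ v ∈ O, c • v ∈ O := by
      intro c hc v hv
      have hcpos' : (0 : ℝ) < ‖c‖ := norm_pos_iff.mpr hc
      obtain ⟨hv1, hv2⟩ := hv
      constructor
      · show M * ‖c • v.1‖ < ‖c • v.2.2‖
        rw [norm_smul, norm_smul]
        calc M * (‖c‖ * ‖v.1‖) = ‖c‖ * (M * ‖v.1‖) := by ring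
        _ < ‖c‖ * ‖v.2.2‖ := (mul_lt_mul_iff_right₀ hcpos').mpr hv1
      · show ε * ‖c • v.2.1‖ < ‖c • v.2.2‖
        rw [norm_smul, norm_smul]
        calc ε * (‖c‖ * ‖v.2.1‖) = ‖c‖ * (ε * ‖v.2.1‖) := by ring
        _ < ‖c‖ * ‖v.2.2‖ := (mul_lt_mul_iff_right₀ hcpos').mpr hv2
    have hPO : P.rep ∈ O := by
      constructor
      · show M * ‖P.rep.1‖ < ‖P.rep.2.2‖
        rw [hP1, norm_zero, mul_zero]
        exact hcpos
      · show ε * ‖P.rep.2.1‖ < ‖P.rep.2.2‖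
        rw [hεdef, div_mul_eq_mul_div]
        rw [div_lt_iff₀ (by positivity)]
        nlinarith [norm_nonneg P.rep.2.1, hcpos]
    have hcl2 : P ∈ closure (Projectivization.mk' ℂ '' range F) := himg ▸ hPclosure
    obtain ⟨b, hbB, hbO⟩ := exists_mem_cone_of_mem_closure hOopen hinv hPO hcl2
    rcases hbB with ⟨x, rfl⟩
    obtain ⟨hb1, hb2⟩ := hbO
    have hb1' : M * 1 < ‖(f x).2‖ := by rwa [norm_one] at hb1
    rw [mul_one] at hb1'
    have hb2' : ε * ‖(f x).1‖ < ‖(f x).2‖ := hb2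
    have hfx := hf x
    set t : ℝ := ‖(f x).1‖ with htdef
    have ht0 : (0 : ℝ) ≤ t := norm_nonneg _
    rcases le_or_gt t T with hle | hgt
    · have : h t ≤ M := hmono ht0 hT0 hle
      linarith
    · have htpos : (0 : ℝ) < t := lt_of_lt_of_le zero_lt_one (le_trans hT1 hgt.le)
      have hdiv : h t / t < ε := hT₀ t (le_trans (le_max_left _ _) hgt.le)
      have : h t < ε * t := by
        rw [div_lt_iff₀ htpos] at hdiv
        linarith [hdiv]
      linarith
end
end
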